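/- Fix r ≥ 1 and bit sequences l, m, n: ℤ → {0,1} with m/l and n/l horizontal r-ribbon strips. Let a≪ ∈ ℕʳ satisfy (a≪)_h = 0 for all h with h≪ ≤ h < r, where h≪ = liminf_{i→−∞} Σ_{j=0}^{r−1} l_{i−j}. Then there exist a unique bit sequence k and a unique a≫ ∈ ℕʳ such that (l, m, n, k, a≪, a≫) is a basic square configuration; moreover (a≫)_h = 0 for all h with h≫ ≤ h < r, where h≫ = liminf_{i→+∞} Σ_{j=0}^{r−1} l_{i−j}. -/

import Mathlib

/-!
A horizontal `r`-ribbon strip over `s` is encoded by the finite set `Q` of its ribbon heads. In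
`ℤ` the outer shape is `s + 𝟙_Q - 𝟙_Q(· + r)`; since a finitely supported `r`-periodic function
vanishes, `Q` is determined by the strip, and the ribbons of `t/s` are the disjoint union of those
of `m/s` and of `t/m`.

Read from left to right, the conditions of a basic square configuration decide, from the data at
positions `< i`, whether `k/l` has a ribbon at `i` and what `a (i + 1)` is (`ScanRule`): there is a
ribbon at the ribbons of `m/l` and `n/l`, and otherwise exactly when a ribbon fits and `a i` is
positive at its height. Two configurations therefore agree by induction from the left, where
`a = a≪`.

For existence the rule is run as a recursion started left of all ribbons of `m/l` and `n/l`, where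
`a≪` vanishes above the window sums of `l`. That vanishing propagates: `a (i + 1)` vanishes at all
heights at least the number of ones of the witness in the window ending at `i`. This gives
`a i (hgtAt r w i) = 0` where `w (i - r) ≠ w i`, and the vanishing of `a≫`. Finally the total mass
of `a` drops at each ribbon of `k/l` outside those of `m/l` and `n/l` and rises only at their
finitely many common ribbons, so `k/l` has finitely many ribbons.
-/

open scoped Classical

/-- A doubly infinite bit sequence: a function `ℤ → ℕ` with all values `≤ 1`. -/
def IsBitSeq (s : ℤ → ℕ) : Prop := ∀ i, s i ≤ 1

/-- The quadruple `(w (i-r), t (i-r), s i, w i)` equals `(1,0,0,1)`: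
the strip `t/s` with witness `w` has an `r`-ribbon at position `i`. -/
def Quad (r : ℕ) (s t w : ℤ → ℕ) (i : ℤ) : Prop :=
  w (i - r) = 1 ∧ t (i - r) = 0 ∧ s i = 0 ∧ w i = 1

/-- `w` is a witness for `t/s` being a horizontal `r`-ribbon strip: for every `i`, the
quadruple `(w (i-r), t (i-r), s i, w i)` is of the form `(a,a,b,b)` or equals `(1,0,0,1)`,
the latter happening only finitely often. -/
def IsWitness (r : ℕ) (s t w : ℤ → ℕ) : Prop :=
  (∀ i : ℤ, (w (i - r) = t (i - r) ∧ s i = w i) ∨ Quad r s t w i) ∧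
    {i : ℤ | Quad r s t w i}.Finite

/-- `t/s` is a horizontal `r`-ribbon strip (`s ≤ʰᵣ t`). -/
def HStrip (r : ℕ) (s t : ℤ → ℕ) : Prop := ∃ w, IsWitness r s t w

/-- The height `∑_{j=1}^{r-1} w (i - j)` of a ribbon at position `i` read off from `w`. -/
def hgtAt (r : ℕ) (w : ℤ → ℕ) (i : ℤ) : ℕ := ∑ j ∈ Finset.Ico 1 r, w (i - (j : ℤ))

/-- The witness of a horizontal `r`-ribbon strip (it is unique). -/
noncomputable def theWitness (r : ℕ) (s t : ℤ → ℕ) : ℤ → ℕ :=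
  if h : HStrip r s t then h.choose else s

/-- The strip `t/s` has a ribbon at position (head diagonal) `i`. -/
def RibbonAt (r : ℕ) (s t : ℤ → ℕ) (i : ℤ) : Prop :=
  Quad r s t (theWitness r s t) i

/-- The number of `r`-ribbons of the strip `t/s`. -/
noncomputable def ribCount (r : ℕ) (s t : ℤ → ℕ) : ℕ :=
  {i : ℤ | RibbonAt r s t i}.ncard

/-- Twice the spin of the horizontal `r`-ribbon strip `t/s`: the total height of the
ribbons of its standardisation. -/
noncomputable def twoSpin (r : ℕ) (s t : ℤ → ℕ) : ℕ :=
  ∑ᶠ i ∈ {i : ℤ | RibbonAt r s t i}, hgtAt r (theWitness r s t) i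

/-- A vector in `ℕ^r`, encoded as a function `ℕ → ℕ` supported on `{0, …, r-1}`. -/
def Supported (r : ℕ) (a : ℕ → ℕ) : Prop := ∀ h : ℕ, r ≤ h → a h = 0

/-- Basic square configuration `((l m // n k), aL, aG)` (Definition of the paper):
all five skew shapes are horizontal `r`-ribbon strips, and with `w` the witness for
`l ≤ʰᵣ k` there is a map `a : ℤ → ℕ → ℕ` satisfying conditions (0)–(4). -/
def IsBSC (r : ℕ) (l m n k : ℤ → ℕ) (aL aG : ℕ → ℕ) : Prop :=
  HStrip r l m ∧ HStrip r l n ∧ HStrip r m k ∧ HStrip r n k ∧ HStrip r l k ∧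
  ∀ w, IsWitness r l k w →
    ∃ a : ℤ → ℕ → ℕ, ∀ i : ℤ,
      (¬ Quad r l k w i → a i = a (i + 1)) ∧
      (w (i - r) ≠ w i → a i (hgtAt r w i) = 0) ∧
      (Quad r l k w i → RibbonAt r l m i → RibbonAt r l n i →
        a (i + 1) = fun h => a i h + (if h = hgtAt r w i then 1 else 0)) ∧
      (Quad r l k w i → RibbonAt r m k i → RibbonAt r n k i →
        a i = fun h => a (i + 1) h + (if h = hgtAt r w i then 1 else 0)) ∧
      (Quad r l k w i → ¬ (RibbonAt r l m i ∧ RibbonAt r l n i) →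
        ¬ (RibbonAt r m k i ∧ RibbonAt r n k i) → a i = a (i + 1)) ∧
      ((∀ j : ℤ, j < i → ¬ Quad r l k w j) → a i = aL) ∧
      ((∀ j : ℤ, i ≤ j → ¬ Quad r l k w j) → a i = aG)

/-- `Q` is the set of ribbon heads; every strip arises this way (`IsWitness.eq_addRibbons`). -/
noncomputable def ribbonWitness (Q : Set ℤ) (s : ℤ → ℕ) (i : ℤ) : ℕ := if i ∈ Q then 1 else s i

noncomputable def addRibbons (r : ℕ) (Q : Set ℤ) (s : ℤ → ℕ) (i : ℤ) : ℕ :=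
  if i + r ∈ Q then 0 else ribbonWitness Q s i

def IsRibbonSet (r : ℕ) (s : ℤ → ℕ) (Q : Set ℤ) : Prop :=
  Q.Finite ∧ ∀ i ∈ Q, s i = 0 ∧ (i - r ∈ Q ∨ s (i - r) = 1)

def ribbons (r : ℕ) (s t : ℤ → ℕ) : Set ℤ := {i | RibbonAt r s t i}

theorem Function.Periodic.eq_zero_of_finite_support {M : Type*} [Zero M] {g : ℤ → M} {c : ℤ}
    (hc : 0 < c) (hg : Function.Periodic g c) (hfin : (Function.support g).Finite) : g = 0 := by
  by_contra hne
  obtain ⟨x, hx, hmax⟩ := Set.exists_max_image _ id hfin (Function.support_nonempty_iff.2 hne)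
  have : x + c ∈ Function.support g := by rwa [Function.mem_support, hg x]
  have := hmax _ this
  simp only [id] at this
  omega

section RibbonSets

variable {r : ℕ} {s t w : ℤ → ℕ} {Q : Set ℤ}

theorem ribbonWitness_le_one (hs : IsBitSeq s) : IsBitSeq (ribbonWitness Q s) := by
  intro i; unfold ribbonWitness; split_ifs <;> simp [hs i]

theorem addRibbons_le_one (hs : IsBitSeq s) : IsBitSeq (addRibbons r Q s) := by
  intro i; unfold addRibbons; split_ifs
  · simp
  · exact ribbonWitness_le_one hs i

@[simp]
theorem addRibbons_empty : addRibbons r ∅ s = s := by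
  funext i; simp [addRibbons, ribbonWitness]

theorem isRibbonSet_empty : IsRibbonSet r s ∅ := ⟨Set.finite_empty, by simp⟩

theorem IsRibbonSet.quad_iff (hQ : IsRibbonSet r s Q) (i : ℤ) :
    Quad r s (addRibbons r Q s) (ribbonWitness Q s) i ↔ i ∈ Q := by
  refine ⟨fun ⟨_, _, hsi, hwi⟩ => ?_, fun hi => ?_⟩
  · by_contra hiQ
    simp [ribbonWitness, hiQ, hsi] at hwi
  · obtain ⟨hsi, hprev⟩ := hQ.2 i hi
    refine ⟨?_, by simp [addRibbons, hi], hsi, by simp [ribbonWitness, hi]⟩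
    rcases hprev with h | h <;> simp [ribbonWitness, h]

theorem IsRibbonSet.isWitness (hQ : IsRibbonSet r s Q) :
    IsWitness r s (addRibbons r Q s) (ribbonWitness Q s) := by
  refine ⟨fun i => ?_, hQ.1.subset fun i hi => (hQ.quad_iff i).1 hi⟩
  by_cases hi : i ∈ Q
  · exact Or.inr ((hQ.quad_iff i).2 hi)
  · exact Or.inl ⟨by simp [addRibbons, hi], by simp [ribbonWitness, hi]⟩

theorem IsRibbonSet.hStrip (hQ : IsRibbonSet r s Q) : HStrip r s (addRibbons r Q s) :=
  ⟨_, hQ.isWitness⟩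

theorem IsWitness.isRibbonSet (hw : IsWitness r s t w) :
    IsRibbonSet r s {i | Quad r s t w i} := by
  refine ⟨hw.2, fun i ⟨hprev, _, hsi, _⟩ => ⟨hsi, ?_⟩⟩
  rcases hw.1 (i - r) with ⟨_, h⟩ | h
  · exact Or.inr (h.trans hprev)
  · exact Or.inl h

theorem IsWitness.eq_ribbonWitness (hw : IsWitness r s t w) :
    w = ribbonWitness {i | Quad r s t w i} s := by
  funext i
  by_cases hi : Quad r s t w i
  · simp [ribbonWitness, hi, hi.2.2.2]
  · simp only [ribbonWitness, Set.mem_ofPred_eq, hi, if_false]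
    exact ((hw.1 i).resolve_right hi).2.symm

theorem IsWitness.eq_addRibbons (hw : IsWitness r s t w) :
    t = addRibbons r {i | Quad r s t w i} s := by
  funext i
  have hshift : i + (r : ℤ) - (r : ℕ) = i := by omega
  by_cases hi : Quad r s t w (i + r)
  · simp only [addRibbons, Set.mem_ofPred_eq, hi, if_true]
    simpa [hshift] using hi.2.1
  · simp only [addRibbons, Set.mem_ofPred_eq, hi, if_false, ← hw.eq_ribbonWitness]
    simpa [hshift] using ((hw.1 (i + r)).resolve_right hi).1.symm

theorem IsRibbonSet.addRibbons_cast (hQ : IsRibbonSet r s Q) (i : ℤ) :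
    (addRibbons r Q s i : ℤ) = s i + Q.indicator 1 i - Q.indicator 1 (i + r) := by
  have hshift : i + (r : ℤ) - (r : ℕ) = i := by omega
  by_cases h₂ : i + r ∈ Q
  · have hprev := (hQ.2 _ h₂).2
    rw [hshift] at hprev
    by_cases h₁ : i ∈ Q
    · simp [addRibbons, h₁, h₂, (hQ.2 i h₁).1]
    · simp [addRibbons, h₁, h₂, hprev.resolve_left h₁]
  · by_cases h₁ : i ∈ Q
    · simp [addRibbons, ribbonWitness, h₁, h₂, (hQ.2 i h₁).1]
    · simp [addRibbons, ribbonWitness, h₁, h₂]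

/-- By `addRibbons_cast`, `𝟙_{Q₁} + 𝟙_{Q₂} - 𝟙_Q` is `r`-periodic with finite support. -/
theorem IsRibbonSet.eq_union_of_addRibbons_eq (hr : 0 < r) {Q₁ Q₂ : Set ℤ}
    (h₁ : IsRibbonSet r s Q₁) (h₂ : IsRibbonSet r (addRibbons r Q₁ s) Q₂) (hQ : IsRibbonSet r s Q)
    (heq : addRibbons r Q₂ (addRibbons r Q₁ s) = addRibbons r Q s) :
    Q = Q₁ ∪ Q₂ ∧ Disjoint Q₁ Q₂ := by
  set g : ℤ → ℤ := fun i => Q₁.indicator 1 i + Q₂.indicator 1 i - Q.indicator 1 i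
  have hper : Function.Periodic g r := fun i => by
    have e₂ := h₂.addRibbons_cast i
    have e₁ := h₁.addRibbons_cast i
    have e := hQ.addRibbons_cast i
    rw [heq] at e₂
    simp only [g]
    omega
  have hfin : (Function.support g).Finite := by
    refine ((h₁.1.union h₂.1).union hQ.1).subset fun i hi => ?_
    by_contra h
    simp only [Set.mem_union, not_or] at h
    simp [g, h.1.1, h.1.2, h.2] at hi
  have hg := hper.eq_zero_of_finite_support (by exact_mod_cast hr) hfin
  have hi : ∀ i, g i = 0 := fun i => congrFun hg i
  refine ⟨Set.ext fun i => ?_, Set.disjoint_left.2 fun i hi₁ hi₂ => ?_⟩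
  · have := hi i
    by_cases m₁ : i ∈ Q₁ <;> by_cases m₂ : i ∈ Q₂ <;> by_cases m : i ∈ Q <;>
      simp [g, m₁, m₂, m] at this ⊢
  · have := hi i
    by_cases m : i ∈ Q <;> simp [g, hi₁, hi₂, m] at this

theorem IsRibbonSet.diff {Q₁ : Set ℤ} (hQ : IsRibbonSet r s Q) :
    IsRibbonSet r (addRibbons r Q₁ s) (Q \ Q₁) := by
  refine ⟨hQ.1.sdiff, fun i ⟨hiQ, hiQ₁⟩ => ?_⟩
  obtain ⟨hsi, hprev⟩ := hQ.2 i hiQ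
  have hshift : i - r + r = i := by omega
  refine ⟨by simp [addRibbons, ribbonWitness, hiQ₁, hsi], ?_⟩
  by_cases h : i - r ∈ Q₁
  · exact Or.inr (by simp [addRibbons, ribbonWitness, hshift, hiQ₁, h])
  · rcases hprev with h' | h'
    · exact Or.inl ⟨h', h⟩
    · exact Or.inr (by simp [addRibbons, ribbonWitness, hshift, hiQ₁, h, h'])

theorem IsRibbonSet.addRibbons_diff {Q₁ : Set ℤ} (hQ : IsRibbonSet r s Q)
    (h₁ : IsRibbonSet r s Q₁) (hsub : Q₁ ⊆ Q) :
    addRibbons r (Q \ Q₁) (addRibbons r Q₁ s) = addRibbons r Q s := by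
  funext i
  have e := (hQ.diff (Q₁ := Q₁)).addRibbons_cast i
  have e₁ := h₁.addRibbons_cast i
  have e₂ := hQ.addRibbons_cast i
  simp only [Set.indicator_sdiff hsub, Pi.sub_apply] at e
  omega

theorem IsRibbonSet.eq_of_addRibbons_eq (hr : 0 < r) {Q₁ Q₂ : Set ℤ} (h₁ : IsRibbonSet r s Q₁)
    (h₂ : IsRibbonSet r s Q₂) (h : addRibbons r Q₁ s = addRibbons r Q₂ s) : Q₁ = Q₂ := by
  have h₁' : IsRibbonSet r (addRibbons r ∅ s) Q₁ := by rwa [addRibbons_empty]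
  have := isRibbonSet_empty.eq_union_of_addRibbons_eq hr h₁' h₂ (by rwa [addRibbons_empty])
  simpa using this.1.symm

theorem IsWitness.unique (hr : 0 < r) {w₁ w₂ : ℤ → ℕ} (h₁ : IsWitness r s t w₁)
    (h₂ : IsWitness r s t w₂) : w₁ = w₂ := by
  rw [h₁.eq_ribbonWitness, h₂.eq_ribbonWitness, h₁.isRibbonSet.eq_of_addRibbons_eq hr
    h₂.isRibbonSet (h₁.eq_addRibbons.symm.trans h₂.eq_addRibbons)]

theorem HStrip.isWitness_theWitness (h : HStrip r s t) : IsWitness r s t (theWitness r s t) := by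
  rw [theWitness, dif_pos h]
  exact h.choose_spec

theorem IsWitness.theWitness_eq (hr : 0 < r) (hw : IsWitness r s t w) : theWitness r s t = w :=
  HStrip.isWitness_theWitness ⟨w, hw⟩ |>.unique hr hw

theorem HStrip.isRibbonSet (h : HStrip r s t) : IsRibbonSet r s (ribbons r s t) :=
  h.isWitness_theWitness.isRibbonSet

theorem HStrip.theWitness_eq (h : HStrip r s t) :
    theWitness r s t = ribbonWitness (ribbons r s t) s :=
  h.isWitness_theWitness.eq_ribbonWitness

theorem HStrip.addRibbons_ribbons (h : HStrip r s t) : addRibbons r (ribbons r s t) s = t :=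
  h.isWitness_theWitness.eq_addRibbons.symm

theorem IsRibbonSet.ribbons_addRibbons (hr : 0 < r) (hQ : IsRibbonSet r s Q) :
    ribbons r s (addRibbons r Q s) = Q := by
  ext i
  change Quad r s _ (theWitness r s _) i ↔ i ∈ Q
  rw [hQ.isWitness.theWitness_eq hr]
  exact hQ.quad_iff i

theorem HStrip.ribbons_trans (hr : 0 < r) {m : ℤ → ℕ} (h₁ : HStrip r s m) (h₂ : HStrip r m t)
    (h₃ : HStrip r s t) :
    ribbons r s m ⊆ ribbons r s t ∧ ribbons r m t = ribbons r s t \ ribbons r s m := by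
  obtain ⟨hunion, hdisj⟩ := h₁.isRibbonSet.eq_union_of_addRibbons_eq hr
    (by rw [h₁.addRibbons_ribbons]; exact h₂.isRibbonSet) h₃.isRibbonSet
    (by rw [h₁.addRibbons_ribbons, h₂.addRibbons_ribbons, h₃.addRibbons_ribbons])
  exact ⟨hunion ▸ Set.subset_union_left, (hdisj.sdiff_eq_of_sup_eq hunion.symm).symm⟩

end RibbonSets

def window (r : ℕ) (w : ℤ → ℕ) (i : ℤ) : ℕ := ∑ j ∈ Finset.range r, w (i - (j : ℤ))

section Window

variable {r : ℕ} {w : ℤ → ℕ}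

theorem window_eq_add_hgtAt (hr : 0 < r) (i : ℤ) : window r w i = w i + hgtAt r w i := by
  rw [window, hgtAt, Finset.range_eq_Ico, Finset.sum_eq_sum_Ico_succ_bot hr]
  simp

theorem window_sub_one (hr : 0 < r) (i : ℤ) : window r w (i - 1) = hgtAt r w i + w (i - r) := by
  have hshift : window r w (i - 1) = ∑ j ∈ Finset.Ico 1 (r + 1), w (i - j) := by
    rw [Finset.sum_Ico_eq_sum_range, window]
    exact Finset.sum_congr (by simp) fun j _ => by push_cast; ring_nf
  rw [hshift, Finset.sum_Ico_succ_top hr, hgtAt]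

theorem window_le (hw : IsBitSeq w) (i : ℤ) : window r w i ≤ r :=
  (Finset.sum_le_sum fun j _ => hw _).trans (by simp)

theorem hgtAt_lt (hr : 0 < r) (hw : IsBitSeq w) (i : ℤ) : hgtAt r w i < r := by
  have : hgtAt r w i ≤ r - 1 := (Finset.sum_le_sum fun j _ => hw _).trans (by simp)
  omega

end Window

theorem add_single_one_eq (A : ℕ → ℕ) (h₀ : ℕ) :
    A + Pi.single h₀ 1 = fun h => A h + if h = h₀ then 1 else 0 := by
  funext h; simp [Pi.single_apply]

section ScanRule

variable {r : ℕ} {l : ℤ → ℕ} {Qm Qn Q : Set ℤ} {a : ℤ → ℕ → ℕ}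

def NeedsRibbon (r : ℕ) (l : ℤ → ℕ) (Qm Qn : Set ℤ) (w : ℤ → ℕ) (A : ℕ → ℕ) (i : ℤ) : Prop :=
  i ∈ Qm ∨ i ∈ Qn ∨ (w (i - r) = 1 ∧ l i = 0 ∧ 0 < A (hgtAt r w i))

/-- The conditions of a basic square configuration, solved for position `i` from the data at
positions `< i`: `Q` is the set of ribbons of `k/l` and `a` the interpolating vectors, which gain
`e_h` at common ribbons of `m/l` and `n/l` (heads `Qm`, `Qn`) and lose it at the other ribbons
of `k/l`. -/
def ScanRule (r : ℕ) (l : ℤ → ℕ) (Qm Qn Q : Set ℤ) (a : ℤ → ℕ → ℕ) : Prop :=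
  ∀ i, (i ∈ Q ↔ NeedsRibbon r l Qm Qn (ribbonWitness Q l) (a i) i) ∧
    a (i + 1) + (if i ∈ Q \ (Qm ∪ Qn) then Pi.single (hgtAt r (ribbonWitness Q l) i) 1 else 0) =
      a i + (if i ∈ Qm ∩ Qn then Pi.single (hgtAt r (ribbonWitness Q l) i) 1 else 0)

theorem hgtAt_congr {w₁ w₂ : ℤ → ℕ} {i : ℤ} (h : ∀ j < i, w₁ j = w₂ j) :
    hgtAt r w₁ i = hgtAt r w₂ i :=
  Finset.sum_congr rfl fun j hj => h _ (by simp at hj; omega)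

theorem needsRibbon_congr (hr : 0 < r) {w₁ w₂ : ℤ → ℕ} {A : ℕ → ℕ} {i : ℤ}
    (h : ∀ j < i, w₁ j = w₂ j) :
    NeedsRibbon r l Qm Qn w₁ A i ↔ NeedsRibbon r l Qm Qn w₂ A i := by
  rw [NeedsRibbon, NeedsRibbon, hgtAt_congr h, h (i - r) (by omega)]

theorem ScanRule.union_subset (hS : ScanRule r l Qm Qn Q a) : Qm ∪ Qn ⊆ Q :=
  fun i hi => (hS i).1.2 (hi.elim Or.inl (Or.inr ∘ Or.inl))

theorem ScanRule.succ_eq (hS : ScanRule r l Qm Qn Q a) {i : ℤ} (hi : i ∉ Q) :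
    a (i + 1) = a i := by
  have hboth : i ∉ Qm ∩ Qn := fun h => hi (hS.union_subset (Or.inl h.1))
  simpa [hi, hboth] using (hS i).2

theorem ScanRule.eq_of_notMem_Ico (hS : ScanRule r l Qm Qn Q a) {i j : ℤ} (hij : i ≤ j)
    (h : ∀ k ∈ Set.Ico i j, k ∉ Q) : a i = a j := by
  induction j, hij using Int.leInduction with
  | base => rfl
  | succ j hij ih =>
    rw [ih fun k hk => h k ⟨hk.1, by linarith [hk.2]⟩, hS.succ_eq (h j ⟨hij, by omega⟩)]

theorem ScanRule.eq_of_notMem (hS : ScanRule r l Qm Qn Q a) {i j : ℤ}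
    (h : ∀ k ∈ Set.Ico (min i j) (max i j), k ∉ Q) : a i = a j := by
  rcases le_total i j with hij | hji
  · exact hS.eq_of_notMem_Ico hij (by simpa [hij] using h)
  · exact (hS.eq_of_notMem_Ico hji (by simpa [hji] using h)).symm

theorem ScanRule.unique (hr : 0 < r) {Q₁ Q₂ : Set ℤ} {a₁ a₂ : ℤ → ℕ → ℕ}
    (h₁ : ScanRule r l Qm Qn Q₁ a₁) (h₂ : ScanRule r l Qm Qn Q₂ a₂) {b : ℤ}
    (hb₁ : ∀ i ∈ Q₁, b ≤ i) (hb₂ : ∀ i ∈ Q₂, b ≤ i) (hab : a₁ b = a₂ b) :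
    Q₁ = Q₂ ∧ ∀ i, b ≤ i → a₁ i = a₂ i := by
  have key : ∀ i, b ≤ i → (∀ j < i, j ∈ Q₁ ↔ j ∈ Q₂) ∧ a₁ i = a₂ i := by
    intro i hi
    induction i, hi using Int.leInduction with
    | base =>
      refine ⟨fun j hj => iff_of_false (fun h => ?_) (fun h => ?_), hab⟩
      · linarith [hb₁ j h]
      · linarith [hb₂ j h]
    | succ i _ ih =>
      obtain ⟨hQ, ha⟩ := ih
      have hw : ∀ j < i, ribbonWitness Q₁ l j = ribbonWitness Q₂ l j := fun j hj => by
        simp only [ribbonWitness, hQ j hj]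
      have hi : i ∈ Q₁ ↔ i ∈ Q₂ := by rw [(h₁ i).1, (h₂ i).1, needsRibbon_congr hr hw, ha]
      refine ⟨fun j hj => (lt_or_eq_of_le (Int.lt_add_one_iff.1 hj)).elim (hQ j) (· ▸ hi), ?_⟩
      have hdiff : i ∈ Q₁ \ (Qm ∪ Qn) ↔ i ∈ Q₂ \ (Qm ∪ Qn) := by simp [hi]
      have e := (h₁ i).2
      simp only [hgtAt_congr hw, ha, hdiff] at e
      exact add_right_cancel (e.trans (h₂ i).2.symm)
  exact ⟨Set.ext fun j => (key (max b (j + 1)) (le_max_left _ _)).1 j (by omega),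
    fun i hi => (key i hi).2⟩


theorem ScanRule.apply_succ_of_ne (hS : ScanRule r l Qm Qn Q a) {i : ℤ} {h : ℕ}
    (hh : h ≠ hgtAt r (ribbonWitness Q l) i) : a (i + 1) h = a i h := by
  have := congrFun (hS i).2 h
  split_ifs at this <;> simpa [Pi.single_apply, hh] using this

theorem ScanRule.succ_eq_add_single (hS : ScanRule r l Qm Qn Q a) {i : ℤ} (hm : i ∈ Qm)
    (hn : i ∈ Qn) : a (i + 1) = a i + Pi.single (hgtAt r (ribbonWitness Q l) i) 1 := by
  have hx : i ∉ Q \ (Qm ∪ Qn) := fun h => h.2 (Or.inl hm)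
  simpa [hx, hm, hn] using (hS i).2

theorem ScanRule.eq_succ_add_single (hS : ScanRule r l Qm Qn Q a) {i : ℤ} (hi : i ∈ Q)
    (hm : i ∉ Qm) (hn : i ∉ Qn) :
    a i = a (i + 1) + Pi.single (hgtAt r (ribbonWitness Q l) i) 1 := by
  simpa [hi, hm, hn] using ((hS i).2).symm

theorem ScanRule.succ_eq_of_not_and (hS : ScanRule r l Qm Qn Q a) {i : ℤ} (hmn : i ∈ Qm ∪ Qn)
    (hnot : ¬ (i ∈ Qm ∧ i ∈ Qn)) : a (i + 1) = a i := by
  have hx : i ∉ Q \ (Qm ∪ Qn) := fun h => h.2 hmn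
  simpa [hx, Set.mem_inter_iff, hnot] using (hS i).2

theorem ScanRule.chain_of_mem (hS : ScanRule r l Qm Qn Q a) (hQm : IsRibbonSet r l Qm)
    (hQn : IsRibbonSet r l Qn) {i : ℤ} (hi : i ∈ Q) :
    l i = 0 ∧ ribbonWitness Q l (i - r) = 1 := by
  have of_subset {P : Set ℤ} (hP : IsRibbonSet r l P) (hPQ : P ⊆ Q) (hiP : i ∈ P) :
      l i = 0 ∧ ribbonWitness Q l (i - r) = 1 := by
    obtain ⟨hli, h | h⟩ := hP.2 i hiP
    · exact ⟨hli, by simp [ribbonWitness, hPQ h]⟩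
    · refine ⟨hli, ?_⟩
      by_cases h' : i - r ∈ Q <;> simp [ribbonWitness, h', h]
  rcases (hS i).1.1 hi with hm | hn | ⟨hw, hli, -⟩
  · exact of_subset hQm (fun j hj => hS.union_subset (Or.inl hj)) hm
  · exact of_subset hQn (fun j hj => hS.union_subset (Or.inr hj)) hn
  · exact ⟨hli, hw⟩

theorem ScanRule.isRibbonSet (hS : ScanRule r l Qm Qn Q a) (hQm : IsRibbonSet r l Qm)
    (hQn : IsRibbonSet r l Qn) (hfin : Q.Finite) : IsRibbonSet r l Q := by
  refine ⟨hfin, fun i hi => ?_⟩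
  obtain ⟨hli, hw⟩ := hS.chain_of_mem hQm hQn hi
  by_cases h : i - r ∈ Q
  · exact ⟨hli, Or.inl h⟩
  · exact ⟨hli, Or.inr (by simpa [ribbonWitness, h] using hw)⟩

theorem ScanRule.apply_eq_zero_of_window_le (hr : 0 < r) (hl : IsBitSeq l)
    (hS : ScanRule r l Qm Qn Q a) (hQm : IsRibbonSet r l Qm) (hQn : IsRibbonSet r l Qn) {N : ℤ}
    (hbase : ∀ i ≤ N, ∀ h, window r (ribbonWitness Q l) i ≤ h → a (i + 1) h = 0) (i : ℤ) :
    ∀ h, window r (ribbonWitness Q l) i ≤ h → a (i + 1) h = 0 := by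
  rcases le_or_gt i N with hi | hi
  · exact hbase i hi
  have hNi : N ≤ i := hi.le
  clear hi
  induction i, hNi using Int.leInduction with
  | base => exact hbase N le_rfl
  | succ i _ ih =>
    have hprev : window r (ribbonWitness Q l) i =
        hgtAt r (ribbonWitness Q l) (i + 1) + ribbonWitness Q l (i + 1 - r) := by
      simpa using window_sub_one hr (w := ribbonWitness Q l) (i + 1)
    have hcur := window_eq_add_hgtAt hr (w := ribbonWitness Q l) (i + 1)
    have hw₁ := ribbonWitness_le_one hl (Q := Q) (i + 1 - r)
    intro h hh
    by_cases hiQ : i + 1 ∈ Q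
    · have hwr := (hS.chain_of_mem hQm hQn hiQ).2
      have hwi : ribbonWitness Q l (i + 1) = 1 := by simp [ribbonWitness, hiQ]
      rw [hS.apply_succ_of_ne (by omega)]
      exact ih h (by omega)
    rw [hS.succ_eq hiQ]
    have hwi : ribbonWitness Q l (i + 1) = l (i + 1) := by simp [ribbonWitness, hiQ]
    by_cases hdrop : ribbonWitness Q l (i + 1 - r) = 1 ∧ l (i + 1) = 0
    · rcases eq_or_lt_of_le (show hgtAt r (ribbonWitness Q l) (i + 1) ≤ h by omega) with heq | hlt
      · subst heq
        by_contra hpos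
        exact hiQ ((hS _).1.2 (Or.inr (Or.inr ⟨hdrop.1, hdrop.2, Nat.pos_of_ne_zero hpos⟩)))
      · exact ih h (by omega)
    · exact ih h (by have := hl (i + 1); omega)

theorem ScanRule.apply_hgtAt_eq_zero (hr : 0 < r) (hl : IsBitSeq l)
    (hS : ScanRule r l Qm Qn Q a) {i : ℤ}
    (hinv : ∀ h, window r (ribbonWitness Q l) (i - 1) ≤ h → a i h = 0)
    (hne : ribbonWitness Q l (i - r) ≠ ribbonWitness Q l i) :
    a i (hgtAt r (ribbonWitness Q l) i) = 0 := by
  have hprev := window_sub_one hr (w := ribbonWitness Q l) i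
  have hwr := ribbonWitness_le_one hl (Q := Q) (i - r)
  have hwi := ribbonWitness_le_one hl (Q := Q) i
  rcases Nat.lt_or_ge (ribbonWitness Q l (i - r)) 1 with h0 | h1
  · exact hinv _ (by omega)
  have hiQ : i ∉ Q := fun h => by
    have : ribbonWitness Q l i = 1 := by simp [ribbonWitness, h]
    omega
  have hli : l i = 0 := by
    have : ribbonWitness Q l i = l i := by simp [ribbonWitness, hiQ]
    omega
  by_contra hpos
  exact hiQ ((hS i).1.2 (Or.inr (Or.inr ⟨by omega, hli, Nat.pos_of_ne_zero hpos⟩)))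

theorem ScanRule.sum_add_card (hr : 0 < r) (hl : IsBitSeq l) (hS : ScanRule r l Qm Qn Q a)
    {b c : ℤ} (hbc : b ≤ c) :
    ∑ h ∈ Finset.range r, a c h + ((Finset.Ico b c).filter (· ∈ Q \ (Qm ∪ Qn))).card =
      ∑ h ∈ Finset.range r, a b h + ((Finset.Ico b c).filter (· ∈ Qm ∩ Qn)).card := by
  induction c, hbc using Int.leInduction with
  | base => simp
  | succ c hbc ih =>
    have e := congrArg (fun A : ℕ → ℕ => ∑ h ∈ Finset.range r, A h) (hS c).2
    have hlt := hgtAt_lt hr (ribbonWitness_le_one hl (Q := Q)) c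
    simp only [Pi.add_apply, Finset.sum_add_distrib] at e
    rw [← Finset.insert_Ico_right_eq_Ico_add_one hbc, Finset.filter_insert, Finset.filter_insert]
    split_ifs at e ⊢ <;> simp_all [Finset.sum_pi_single'] <;> omega

/-- Every ribbon outside `Qm ∪ Qn` lowers the mass `∑ h < r, a i h`, which rises only on
`Qm ∩ Qn`. -/
theorem ScanRule.finite (hr : 0 < r) (hl : IsBitSeq l) (hS : ScanRule r l Qm Qn Q a)
    (hQm : Qm.Finite) (hQn : Qn.Finite) {b : ℤ} (hb : ∀ i ∈ Q, b ≤ i) : Q.Finite := by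
  refine Set.Finite.of_sdiff ?_ (hQm.union hQn)
  by_contra hinf
  obtain ⟨S, hSE, hcard⟩ := Set.Infinite.exists_subset_card_eq hinf
    (∑ h ∈ Finset.range r, a b h + (hQm.inter_of_left Qn).toFinset.card + 1)
  obtain ⟨c, hc⟩ := S.bddAbove
  have hextra : S ⊆ (Finset.Ico b (max b c + 1)).filter (· ∈ Q \ (Qm ∪ Qn)) := fun i hi => by
    have := hc hi
    simp only [Finset.mem_filter, Finset.mem_Ico]
    exact ⟨⟨hb i (hSE hi).1, by omega⟩, hSE hi⟩
  have hboth : ((Finset.Ico b (max b c + 1)).filter (· ∈ Qm ∩ Qn)).card ≤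
      (hQm.inter_of_left Qn).toFinset.card :=
    Finset.card_le_card fun i hi => by simpa using (Finset.mem_filter.1 hi).2
  have := hS.sum_add_card hr hl (show b ≤ max b c + 1 by omega)
  have := Finset.card_le_card hextra
  omega

theorem ScanRule.isBSC (hr : 0 < r) (hS : ScanRule r l Qm Qn Q a) (hQm : IsRibbonSet r l Qm)
    (hQn : IsRibbonSet r l Qn) (hQ : IsRibbonSet r l Q)
    (hvan : ∀ i, ribbonWitness Q l (i - r) ≠ ribbonWitness Q l i →
      a i (hgtAt r (ribbonWitness Q l) i) = 0)
    {aL aG : ℕ → ℕ} (haL : ∀ i, (∀ j < i, j ∉ Q) → a i = aL)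
    (haG : ∀ i, (∀ j, i ≤ j → j ∉ Q) → a i = aG) :
    IsBSC r l (addRibbons r Qm l) (addRibbons r Qn l) (addRibbons r Q l) aL aG := by
  have hmQ : Qm ⊆ Q := fun i hi => hS.union_subset (Or.inl hi)
  have hnQ : Qn ⊆ Q := fun i hi => hS.union_subset (Or.inr hi)
  have hmk := hQ.addRibbons_diff hQm hmQ
  have hnk := hQ.addRibbons_diff hQn hnQ
  refine ⟨hQm.hStrip, hQn.hStrip, hmk ▸ hQ.diff.hStrip, hnk ▸ hQ.diff.hStrip, hQ.hStrip,
    fun w hw => ?_⟩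
  obtain rfl := hw.unique hr hQ.isWitness
  have hk := hQ.quad_iff
  have hlm := Set.ext_iff.1 (hQm.ribbons_addRibbons hr)
  have hln := Set.ext_iff.1 (hQn.ribbons_addRibbons hr)
  have hmk' := Set.ext_iff.1 (hmk ▸ (hQ.diff (Q₁ := Qm)).ribbons_addRibbons hr)
  have hnk' := Set.ext_iff.1 (hnk ▸ (hQ.diff (Q₁ := Qn)).ribbons_addRibbons hr)
  refine ⟨a, fun i => ⟨fun hi => (hS.succ_eq ((hk i).not.1 hi)).symm, hvan i,
    fun _ hm hn => ?_, fun hi hm hn => ?_, fun hi hmn hmkn => ?_,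
    fun h => haL i fun j hj hjQ => h j hj ((hk j).2 hjQ),
    fun h => haG i fun j hj hjQ => h j hj ((hk j).2 hjQ)⟩⟩
  · rw [hS.succ_eq_add_single ((hlm i).1 hm) ((hln i).1 hn), add_single_one_eq]
  · rw [hS.eq_succ_add_single ((hk i).1 hi) ((hmk' i).1 hm).2 ((hnk' i).1 hn).2, add_single_one_eq]
  · have hiQ := (hk i).1 hi
    have hor : i ∈ Qm ∪ Qn := by
      by_contra h
      simp only [Set.mem_union, not_or] at h
      exact hmkn ⟨(hmk' i).2 ⟨hiQ, h.1⟩, (hnk' i).2 ⟨hiQ, h.2⟩⟩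
    exact (hS.succ_eq_of_not_and hor fun h => hmn ⟨(hlm i).2 h.1, (hln i).2 h.2⟩).symm

end ScanRule

section Uniqueness

variable {r : ℕ} {l m n k : ℤ → ℕ} {aL aG : ℕ → ℕ}

theorem IsBSC.exists_scanRule (hr : 0 < r) (h : IsBSC r l m n k aL aG) :
    ∃ a, ScanRule r l (ribbons r l m) (ribbons r l n) (ribbons r l k) a ∧
      (∀ i, (∀ j < i, j ∉ ribbons r l k) → a i = aL) ∧
      (∀ i, (∀ j, i ≤ j → j ∉ ribbons r l k) → a i = aG) := by
  obtain ⟨hlm, hln, hmk, hnk, hlk, hcond⟩ := h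
  obtain ⟨a, ha⟩ := hcond _ hlk.isWitness_theWitness
  obtain ⟨hmQ, hmk_eq⟩ := hlm.ribbons_trans hr hmk hlk
  obtain ⟨hnQ, hnk_eq⟩ := hln.ribbons_trans hr hnk hlk
  refine ⟨a, fun i => ?_, fun i hi => (ha i).2.2.2.2.2.1 hi, fun i hi => (ha i).2.2.2.2.2.2 hi⟩
  obtain ⟨h₀, h₁, h₂, h₃, h₄, -, -⟩ := ha i
  have hmk_iff : RibbonAt r m k i ↔ i ∈ ribbons r l k \ ribbons r l m := Set.ext_iff.1 hmk_eq i
  have hnk_iff : RibbonAt r n k i ↔ i ∈ ribbons r l k \ ribbons r l n := Set.ext_iff.1 hnk_eq i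
  rw [← hlk.theWitness_eq]
  refine ⟨⟨fun hi => ?_, fun hi => ?_⟩, ?_⟩
  · by_cases hm : i ∈ ribbons r l m
    · exact Or.inl hm
    by_cases hn : i ∈ ribbons r l n
    · exact Or.inr (Or.inl hn)
    have := congrFun (h₃ hi (hmk_iff.2 ⟨hi, hm⟩) (hnk_iff.2 ⟨hi, hn⟩))
      (hgtAt r (theWitness r l k) i)
    simp only [if_true] at this
    exact Or.inr (Or.inr ⟨hi.1, hi.2.2.1, by omega⟩)
  · rcases hi with hm | hn | ⟨hw, hli, hpos⟩
    · exact hmQ hm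
    · exact hnQ hn
    by_contra hi
    have hwi : theWitness r l k i = 0 := by
      rw [hlk.theWitness_eq]; simp [ribbonWitness, hi, hli]
    exact (h₁ (by omega)).not_gt hpos
  by_cases hi : i ∈ ribbons r l k
  · by_cases hm : i ∈ ribbons r l m <;> by_cases hn : i ∈ ribbons r l n
    · simp [h₂ hi hm hn, hm, hn, ← add_single_one_eq]
    · simp [h₄ hi (fun h => hn h.2) (fun h => (hmk_iff.1 h.1).2 hm), hm, hn]
    · simp [h₄ hi (fun h => hm h.1) (fun h => (hnk_iff.1 h.2).2 hn), hm, hn]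
    · simp [h₃ hi (hmk_iff.2 ⟨hi, hm⟩) (hnk_iff.2 ⟨hi, hn⟩), hi, hm, hn, ← add_single_one_eq]
  · have hm : i ∉ ribbons r l m := fun h => hi (hmQ h)
    simp [h₀ hi, hi, hm]

theorem IsBSC.unique (hr : 0 < r) {k' : ℤ → ℕ} {aG' : ℕ → ℕ} (h : IsBSC r l m n k aL aG)
    (h' : IsBSC r l m n k' aL aG') : k = k' ∧ aG = aG' := by
  obtain ⟨a, hS, haL, haG⟩ := h.exists_scanRule hr
  obtain ⟨a', hS', haL', haG'⟩ := h'.exists_scanRule hr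
  have hfin := h.2.2.2.2.1.isRibbonSet.1.union h'.2.2.2.2.1.isRibbonSet.1
  obtain ⟨b, hb⟩ := hfin.bddBelow
  obtain ⟨c, hc⟩ := hfin.bddAbove
  have hb₁ : ∀ j < b, j ∉ ribbons r l k := fun j hj h => by linarith [hb (Or.inl h)]
  have hb₂ : ∀ j < b, j ∉ ribbons r l k' := fun j hj h => by linarith [hb (Or.inr h)]
  obtain ⟨hQ, ha⟩ := hS.unique hr hS' (fun i hi => not_lt.1 (hb₁ i · hi))
    (fun i hi => not_lt.1 (hb₂ i · hi)) ((haL b hb₁).trans (haL' b hb₂).symm)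
  have hc₁ : ∀ j, max b (c + 1) ≤ j → j ∉ ribbons r l k := fun j hj h => by
    linarith [hc (Or.inl h), le_max_right b (c + 1)]
  have hc₂ : ∀ j, max b (c + 1) ≤ j → j ∉ ribbons r l k' := fun j hj h => by
    linarith [hc (Or.inr h), le_max_right b (c + 1)]
  refine ⟨?_, ?_⟩
  · rw [← h.2.2.2.2.1.addRibbons_ribbons, hQ, h'.2.2.2.2.1.addRibbons_ribbons]
  · rw [← haG _ hc₁, ← haG' _ hc₂, ha _ (le_max_left _ _)]

end Uniqueness

section Construction

variable (r : ℕ) (l : ℤ → ℕ) (Qm Qn : Set ℤ) (aL : ℕ → ℕ) (N : ℤ)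

noncomputable def scanStep (i : ℤ) (S : (ℤ → ℕ) × (ℕ → ℕ)) : (ℤ → ℕ) × (ℕ → ℕ) :=
  (Function.update S.1 i (if NeedsRibbon r l Qm Qn S.1 S.2 i then 1 else l i),
    if i ∈ Qm ∩ Qn then S.2 + Pi.single (hgtAt r S.1 i) 1
    else if NeedsRibbon r l Qm Qn S.1 S.2 i ∧ i ∉ Qm ∪ Qn then S.2 - Pi.single (hgtAt r S.1 i) 1
    else S.2)

/-- `scan t` is the witness with positions `N + 1, …, N + t` decided, and the vector
`a (N + t + 1)`. -/
noncomputable def scan : ℕ → (ℤ → ℕ) × (ℕ → ℕ)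
  | 0 => (l, aL)
  | t + 1 => scanStep r l Qm Qn (N + 1 + t) (scan t)

noncomputable def scanWitness (i : ℤ) : ℕ := (scan r l Qm Qn aL N (i - N).toNat).1 i

noncomputable def scanVec (i : ℤ) : ℕ → ℕ := (scan r l Qm Qn aL N (i - N - 1).toNat).2

def scanRibbons : Set ℤ :=
  {i | N < i ∧ NeedsRibbon r l Qm Qn (scanWitness r l Qm Qn aL N) (scanVec r l Qm Qn aL N i) i}

variable {r l Qm Qn aL N}

theorem scan_fst_add (t d : ℕ) {j : ℤ} (hj : j ≤ N + t) :
    (scan r l Qm Qn aL N (t + d)).1 j = (scan r l Qm Qn aL N t).1 j := by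
  induction d with
  | zero => rfl
  | succ d ih =>
    rw [← ih, ← add_assoc]
    exact Function.update_of_ne (by push_cast; omega) _ _

theorem scan_fst_eq_scanWitness (t : ℕ) {j : ℤ} (hj : j ≤ N + t) :
    (scan r l Qm Qn aL N t).1 j = scanWitness r l Qm Qn aL N j := by
  obtain ⟨d, rfl⟩ : ∃ d, t = (j - N).toNat + d := ⟨t - (j - N).toNat, by omega⟩
  exact scan_fst_add _ d (by omega)

theorem scanWitness_of_le {j : ℤ} (hj : j ≤ N) : scanWitness r l Qm Qn aL N j = l j := by
  simp [scanWitness, Int.toNat_eq_zero.2 (by omega : j - N ≤ 0), scan]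

theorem scanVec_of_le {i : ℤ} (hi : i ≤ N + 1) : scanVec r l Qm Qn aL N i = aL := by
  simp [scanVec, Int.toNat_eq_zero.2 (by omega : i - N - 1 ≤ 0), scan]

theorem scanWitness_scanVec_eq_scanStep (hr : 0 < r) {i : ℤ} (hi : N < i) :
    scanWitness r l Qm Qn aL N i = (scanStep r l Qm Qn i
        (scanWitness r l Qm Qn aL N, scanVec r l Qm Qn aL N i)).1 i ∧
      scanVec r l Qm Qn aL N (i + 1) =
        (scanStep r l Qm Qn i (scanWitness r l Qm Qn aL N, scanVec r l Qm Qn aL N i)).2 := by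
  obtain ⟨t, rfl⟩ : ∃ t : ℕ, i = N + 1 + t := ⟨(i - N - 1).toNat, by omega⟩
  have hw : ∀ j < N + 1 + t, (scan r l Qm Qn aL N t).1 j = scanWitness r l Qm Qn aL N j :=
    fun j hj => scan_fst_eq_scanWitness t (by omega)
  have hstep : scan r l Qm Qn aL N (t + 1) =
      scanStep r l Qm Qn (N + 1 + t) (scan r l Qm Qn aL N t) := rfl
  simp only [scanWitness, scanVec, show (N + 1 + t - N).toNat = t + 1 by omega,
    show (N + 1 + t + 1 - N - 1).toNat = t + 1 by omega,
    show (N + 1 + t - N - 1).toNat = t by omega, hstep, scanStep, Function.update_self,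
    needsRibbon_congr hr hw, hgtAt_congr hw, and_self]

theorem scanWitness_eq_ribbonWitness (hr : 0 < r) :
    scanWitness r l Qm Qn aL N = ribbonWitness (scanRibbons r l Qm Qn aL N) l := by
  funext i
  by_cases hi : N < i
  · rw [(scanWitness_scanVec_eq_scanStep hr hi).1]
    simp [scanStep, ribbonWitness, scanRibbons, hi]
  · simp [ribbonWitness, scanRibbons, hi, scanWitness_of_le (not_lt.1 hi)]

theorem scanVec_succ_add (hr : 0 < r) {i : ℤ} (hi : N < i) :
    scanVec r l Qm Qn aL N (i + 1) +
        (if i ∈ scanRibbons r l Qm Qn aL N \ (Qm ∪ Qn) then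
          Pi.single (hgtAt r (scanWitness r l Qm Qn aL N) i) 1 else 0) =
      scanVec r l Qm Qn aL N i +
        (if i ∈ Qm ∩ Qn then Pi.single (hgtAt r (scanWitness r l Qm Qn aL N) i) 1 else 0) := by
  rw [(scanWitness_scanVec_eq_scanStep hr hi).2]
  simp only [scanStep]
  set A := scanVec r l Qm Qn aL N i
  set h₀ := hgtAt r (scanWitness r l Qm Qn aL N) i
  by_cases hb : i ∈ Qm ∩ Qn
  · have hmem : i ∉ scanRibbons r l Qm Qn aL N \ (Qm ∪ Qn) := fun h => h.2 (Or.inl hb.1)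
    rw [if_pos hb, if_neg hmem, if_pos hb, add_zero]
  by_cases hx : NeedsRibbon r l Qm Qn (scanWitness r l Qm Qn aL N) A i ∧ i ∉ Qm ∪ Qn
  · have hpos : 0 < A h₀ := by
      rcases hx with ⟨hm | hn | ⟨-, -, hpos⟩, hmn⟩
      · exact absurd (Or.inl hm) hmn
      · exact absurd (Or.inr hn) hmn
      · exact hpos
    have hmem : i ∈ scanRibbons r l Qm Qn aL N \ (Qm ∪ Qn) := ⟨⟨hi, hx.1⟩, hx.2⟩
    rw [if_neg hb, if_pos hx, if_pos hmem, if_neg hb, add_zero]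
    funext h
    by_cases hh : h = h₀
    · subst hh; simp; omega
    · simp [hh]
  · have hmem : i ∉ scanRibbons r l Qm Qn aL N \ (Qm ∪ Qn) := fun h => hx ⟨h.1.2, h.2⟩
    rw [if_neg hb, if_neg hx, if_neg hmem, if_neg hb]

theorem not_needsRibbon_scan_of_le (hr : 0 < r) (hN : ∀ i ∈ Qm ∪ Qn, N < i)
    (hNa : ∀ i ≤ N, ∀ h, window r l i ≤ h → aL h = 0) {i : ℤ} (hi : i ≤ N) :
    ¬ NeedsRibbon r l Qm Qn (scanWitness r l Qm Qn aL N) (scanVec r l Qm Qn aL N i) i := by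
  rintro (hm | hn | ⟨-, hli, hpos⟩)
  · linarith [hN i (Or.inl hm)]
  · linarith [hN i (Or.inr hn)]
  rw [scanVec_of_le (by omega), hgtAt_congr (w₂ := l) fun j hj => scanWitness_of_le (by omega)]
    at hpos
  have := hNa i hi _ (by rw [window_eq_add_hgtAt hr, hli, zero_add])
  omega

theorem exists_scanRule (hr : 0 < r) (hN : ∀ i ∈ Qm ∪ Qn, N < i)
    (hNa : ∀ i ≤ N, ∀ h, window r l i ≤ h → aL h = 0) :
    ∃ Q a, ScanRule r l Qm Qn Q a ∧ (∀ i ∈ Q, N < i) ∧ ∀ i ≤ N + 1, a i = aL := by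
  refine ⟨scanRibbons r l Qm Qn aL N, scanVec r l Qm Qn aL N, fun i => ?_, fun i hi => hi.1,
    fun i hi => scanVec_of_le hi⟩
  rw [← scanWitness_eq_ribbonWitness hr]
  by_cases hi : N < i
  · exact ⟨⟨fun h => h.2, fun h => ⟨hi, h⟩⟩, scanVec_succ_add hr hi⟩
  · have hb : i ∉ Qm ∩ Qn := fun h => hi (hN i (Or.inl h.1))
    refine ⟨iff_of_false (fun h => hi h.1) (not_needsRibbon_scan_of_le hr hN hNa (not_lt.1 hi)), ?_⟩
    simp [scanRibbons, hi, hb, scanVec_of_le (show i + 1 ≤ N + 1 by omega),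
      scanVec_of_le (show i ≤ N + 1 by omega)]

end Construction

theorem Nat.eventually_liminf_le {α : Type*} (f : Filter α) (u : α → ℕ) :
    ∀ᶠ x in f, Filter.liminf u f ≤ u x := by
  rcases Nat.eq_zero_or_pos (Filter.liminf u f) with h | h
  · simp [h]
  · filter_upwards [Filter.eventually_lt_of_lt_liminf (Nat.sub_lt h one_pos)
      (Filter.isBoundedUnder_of ⟨0, fun x => Nat.zero_le (u x)⟩)] with x hx
    omega

theorem Nat.frequently_le_of_liminf_le {α : Type*} {f : Filter α} [f.NeBot] {u : α → ℕ} {B : ℕ}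
    (hu : ∀ x, u x ≤ B) {b : ℕ} (h : Filter.liminf u f ≤ b) : ∃ᶠ x in f, u x ≤ b :=
  (Filter.frequently_lt_of_liminf_lt
    (Filter.IsBoundedUnder.isCoboundedUnder_ge (Filter.isBoundedUnder_of ⟨B, hu⟩))
    (Nat.lt_succ_of_le h)).mono fun _ hx => Nat.lt_succ_iff.1 hx

theorem window_congr {r : ℕ} {w₁ w₂ : ℤ → ℕ} {i : ℤ} (h : ∀ j, i - r < j → j ≤ i → w₁ j = w₂ j) :
    window r w₁ i = window r w₂ i :=
  Finset.sum_congr rfl fun j hj => h _ (by simp at hj; omega) (by omega)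

section Existence

variable {r : ℕ} {l m n : ℤ → ℕ} {aL : ℕ → ℕ}

theorem exists_window_threshold (haL : Supported r aL)
    (hvan : ∀ h, Filter.liminf (window r l) Filter.atBot ≤ h → h < r → aL h = 0)
    {P : Set ℤ} (hP : P.Finite) :
    ∃ N, (∀ i ∈ P, N < i) ∧ ∀ i ≤ N, ∀ h, window r l i ≤ h → aL h = 0 := by
  obtain ⟨N₀, hN₀⟩ := Filter.eventually_atBot.1 (Nat.eventually_liminf_le .atBot (window r l))
  obtain ⟨b, hb⟩ := hP.bddBelow
  refine ⟨min N₀ (b - 1), fun i hi => by linarith [hb hi, min_le_right N₀ (b - 1)],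
    fun i hi h hh => ?_⟩
  by_cases hhr : h < r
  · exact hvan h ((hN₀ i (hi.trans (min_le_left _ _))).trans hh) hhr
  · exact haL h (not_lt.1 hhr)

theorem ScanRule.apply_eq_zero_of_liminf_le {Qm Qn Q : Set ℤ} {a : ℤ → ℕ → ℕ} (hl : IsBitSeq l)
    (hS : ScanRule r l Qm Qn Q a)
    (hinv : ∀ i h, window r (ribbonWitness Q l) i ≤ h → a (i + 1) h = 0) {c : ℤ}
    (hc : ∀ i ∈ Q, i ≤ c) {h : ℕ} (hh : Filter.liminf (window r l) Filter.atTop ≤ h) :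
    a (c + 1) h = 0 := by
  obtain ⟨i, hi, hwin⟩ := Filter.frequently_atTop.1
    (Nat.frequently_le_of_liminf_le (window_le hl) hh) (c + r)
  rw [hS.eq_of_notMem_Ico (show c + 1 ≤ i + 1 by omega)
    fun k hk hkQ => by linarith [hc k hkQ, hk.1]]
  refine hinv i h (le_of_eq_of_le (window_congr fun j hj _ => ?_) hwin)
  have : j ∉ Q := fun hjQ => by linarith [hc j hjQ]
  simp [ribbonWitness, this]

theorem exists_isBSC (hr : 0 < r) (hl : IsBitSeq l) (hml : HStrip r l m) (hnl : HStrip r l n)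
    (haL : Supported r aL)
    (hvan : ∀ h, Filter.liminf (window r l) Filter.atBot ≤ h → h < r → aL h = 0) :
    ∃ k aG, IsBitSeq k ∧ Supported r aG ∧ IsBSC r l m n k aL aG ∧
      ∀ h, Filter.liminf (window r l) Filter.atTop ≤ h → h < r → aG h = 0 := by
  have hQm := hml.isRibbonSet
  have hQn := hnl.isRibbonSet
  obtain ⟨N, hN, hNa⟩ := exists_window_threshold haL hvan (hQm.1.union hQn.1)
  obtain ⟨Q, a, hS, hQN, haN⟩ := exists_scanRule hr hN hNa
  have hQ := hS.isRibbonSet hQm hQn (hS.finite hr hl hQm.1 hQn.1 fun i hi => (hQN i hi).le)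
  have hinv := hS.apply_eq_zero_of_window_le hr hl hQm hQn (N := N) fun i hi h hh => by
    rw [haN _ (by omega)]
    refine hNa i hi h (le_of_eq_of_le (window_congr fun j _ hj => ?_) hh)
    have : j ∉ Q := fun hjQ => (hQN j hjQ).not_ge (hj.trans hi)
    simp [ribbonWitness, this]
  obtain ⟨c, hc⟩ := hQ.1.bddAbove
  refine ⟨addRibbons r Q l, a (c + 1), addRibbons_le_one hl,
    fun h hh => hinv c h ((window_le (ribbonWitness_le_one hl) c).trans hh), ?_,
    fun h hh _ => hS.apply_eq_zero_of_liminf_le hl hinv hc hh⟩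
  rw [← hml.addRibbons_ribbons, ← hnl.addRibbons_ribbons]
  refine hS.isBSC hr hQm hQn hQ
    (fun i hne => hS.apply_hgtAt_eq_zero hr hl (fun h hh => by simpa using hinv (i - 1) h hh) hne)
    (fun i hi => ?_) (fun i hi => hS.eq_of_notMem fun k hk hkQ => ?_)
  · rw [← haN (N + 1) le_rfl]
    refine hS.eq_of_notMem fun k hk hkQ => ?_
    have := hQN k hkQ
    exact hi k (by simp only [Set.mem_Ico] at hk; omega) hkQ
  · have := hc hkQ
    exact hi k (by simp only [Set.mem_Ico] at hk; omega) hkQ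

end Existence

theorem stmt13_general (r : ℕ) (hr : 1 ≤ r) (l m n : ℤ → ℕ)
    (hl : IsBitSeq l)
    (hml : HStrip r l m) (hnl : HStrip r l n)
    (aL : ℕ → ℕ) (haL : Supported r aL)
    (hvan : ∀ h : ℕ,
      Filter.liminf (fun i : ℤ => ∑ j ∈ Finset.range r, l (i - (j : ℤ))) Filter.atBot ≤ h →
      h < r → aL h = 0) :
    ∃ (k : ℤ → ℕ) (aG : ℕ → ℕ),
      (IsBitSeq k ∧ Supported r aG ∧ IsBSC r l m n k aL aG ∧
        (∀ h : ℕ,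
          Filter.liminf (fun i : ℤ => ∑ j ∈ Finset.range r, l (i - (j : ℤ)))
              Filter.atTop ≤ h →
          h < r → aG h = 0)) ∧
      ∀ (k' : ℤ → ℕ) (aG' : ℕ → ℕ),
        IsBitSeq k' → Supported r aG' → IsBSC r l m n k' aL aG' → k' = k ∧ aG' = aG := by
  obtain ⟨k, aG, hk, haG, hbsc, hvanG⟩ := exists_isBSC hr hl hml hnl haL hvan
  exact ⟨k, aG, ⟨hk, haG, hbsc, hvanG⟩, fun k' aG' _ _ h' => h'.unique hr hbsc⟩

/-- Main theorem: given `m/l` and `n/l` horizontal `r`-ribbon strips, and `a≪ ∈ ℕʳ`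
vanishing in coordinates `h` with `h≪ ≤ h < r` (where `h≪` is the liminf at `-∞` of the
sums of `r` consecutive bits of `l`), there are a unique bit sequence `k` and a unique
`a≫ ∈ ℕʳ` making `((l m // n k), a≪, a≫)` a basic square configuration; moreover `a≫`
vanishes in coordinates `h` with `h≫ ≤ h < r` (liminf at `+∞`). -/
theorem stmt13 (r : ℕ) (hr : 1 ≤ r) (l m n : ℤ → ℕ)
    (hl : IsBitSeq l) (hm : IsBitSeq m) (hn : IsBitSeq n)
    (hml : HStrip r l m) (hnl : HStrip r l n)
    (aL : ℕ → ℕ) (haL : Supported r aL)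
    (hvan : ∀ h : ℕ,
      Filter.liminf (fun i : ℤ => ∑ j ∈ Finset.range r, l (i - (j : ℤ))) Filter.atBot ≤ h →
      h < r → aL h = 0) :
    ∃ (k : ℤ → ℕ) (aG : ℕ → ℕ),
      (IsBitSeq k ∧ Supported r aG ∧ IsBSC r l m n k aL aG ∧
        (∀ h : ℕ,
          Filter.liminf (fun i : ℤ => ∑ j ∈ Finset.range r, l (i - (j : ℤ)))
              Filter.atTop ≤ h →
          h < r → aG h = 0)) ∧
      ∀ (k' : ℤ → ℕ) (aG' : ℕ → ℕ),
        IsBitSeq k' → Supported r aG' → IsBSC r l m n k' aL aG' → k' = k ∧ aG' = aG :=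
  stmt13_general r hr l m n hl hml hnl aL haL hvan
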